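/- arXiv:2107.00006 — 3 statements merged into one kernel-verified Lean document; each statement's English description precedes it below -/
import Mathlib

section
/- Let (Y_{-k})_{k∈ℕ} be a reversed supermartingale (indexed by the negative integers) taking values in [0, c] for a constant c. Define Δ_k := Y_{-k-1} − E[Y_{-k} | F_{-k-1}] and V_k := sup_{q∈ℕ} Σ_{n=0}^{q} Δ_{k+n}. Then each V_k is integrable, with E[V_k] = l − E[Y_{-k}], where l := lim_{k→∞} E[Y_{-k}], and in particular E[V_k] → 0 as k → ∞. -/
open MeasureTheory Filter

/-- For a reversed supermartingale (Y k = Y₋ₖ) with values in [0, c], setting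
Δ_k = Y₋ₖ₋₁ − E[Y₋ₖ | F₋ₖ₋₁] and V_k = sup_q Σ_{n=0}^q Δ_{k+n}, each V_k is
integrable with E[V_k] = l − E[Y₋ₖ] where l = lim E[Y₋ₖ], and E[V_k] → 0. -/
theorem reversed_supermartingale_compensator_integral
    {Ω : Type*} {m0 : MeasurableSpace Ω} {μ : Measure Ω} [IsProbabilityMeasure μ]
    (G : ℕ → MeasurableSpace Ω) (hG_anti : ∀ k, G (k + 1) ≤ G k)
    (hG_le : ∀ k, G k ≤ m0)
    (Y : ℕ → Ω → ℝ) (hadp : ∀ k, StronglyMeasurable[G k] (Y k))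
    (c : ℝ) (hbdd : ∀ k, ∀ᵐ ω ∂μ, 0 ≤ Y k ω ∧ Y k ω ≤ c)
    (hsuper : ∀ k, μ[Y k | G (k + 1)] ≤ᵐ[μ] Y (k + 1))
    (Δ : ℕ → Ω → ℝ) (hΔ : ∀ k ω, Δ k ω = Y (k + 1) ω - (μ[Y k | G (k + 1)]) ω)
    (V : ℕ → Ω → ℝ) (hV : ∀ k ω, V k ω = ⨆ q : ℕ, ∑ n ∈ Finset.range (q + 1), Δ (k + n) ω)
    (l : ℝ) (hl : Tendsto (fun k : ℕ => ∫ ω, Y k ω ∂μ) atTop (nhds l)) :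
    (∀ k, Integrable (V k) μ ∧ ∫ ω, V k ω ∂μ = l - ∫ ω, Y k ω ∂μ) ∧
      Tendsto (fun k : ℕ => ∫ ω, V k ω ∂μ) atTop (nhds 0) := by
  -- basic integrability facts
  have hYint : ∀ k, Integrable (Y k) μ := by
    intro k
    refine (integrable_const c).mono' ((hadp k).mono (hG_le k)).aestronglyMeasurable ?_
    filter_upwards [hbdd k] with ω h
    rw [Real.norm_eq_abs, abs_of_nonneg h.1]; exact h.2
  have hΔeq : ∀ k, Δ k = fun ω => Y (k + 1) ω - (μ[Y k | G (k + 1)]) ω :=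
    fun k => funext (hΔ k)
  have hΔsm : ∀ k, StronglyMeasurable (Δ k) := by
    intro k
    rw [hΔeq k]
    exact ((hadp (k + 1)).mono (hG_le _)).sub (stronglyMeasurable_condExp.mono (hG_le _))
  have hΔint : ∀ k, Integrable (Δ k) μ := by
    intro k
    rw [hΔeq k]
    exact (hYint (k + 1)).sub integrable_condExp
  have hΔnn : ∀ᵐ ω ∂μ, ∀ k, 0 ≤ Δ k ω := by
    rw [ae_all_iff]
    intro k
    filter_upwards [hsuper k] with ω h
    rw [hΔ k ω]; linarith
  have hΔmean : ∀ k, ∫ ω, Δ k ω ∂μ = ∫ ω, Y (k + 1) ω ∂μ - ∫ ω, Y k ω ∂μ := by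
    intro k
    calc ∫ ω, Δ k ω ∂μ = ∫ ω, (Y (k + 1) ω - (μ[Y k | G (k + 1)]) ω) ∂μ := by
          simp_rw [hΔ]
      _ = ∫ ω, Y (k + 1) ω ∂μ - ∫ ω, (μ[Y k | G (k + 1)]) ω ∂μ :=
          integral_sub (hYint (k + 1)) integrable_condExp
      _ = _ := by rw [integral_condExp (hG_le (k + 1))]
  have hmono : Monotone (fun k => ∫ ω, Y k ω ∂μ) := by
    apply monotone_nat_of_le_succ
    intro k
    have h0 : 0 ≤ ∫ ω, Δ k ω ∂μ :=
      integral_nonneg_of_ae (hΔnn.mono fun ω h => h k)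
    have := hΔmean k
    linarith
  have hYle : ∀ k, ∫ ω, Y k ω ∂μ ≤ l := fun k => hmono.ge_of_tendsto hl k
  -- main pointwise work for each k
  have key : ∀ k, Integrable (V k) μ ∧ ∫ ω, V k ω ∂μ = l - ∫ ω, Y k ω ∂μ := by
    intro k
    set S : ℕ → Ω → ℝ := fun q ω => ∑ n ∈ Finset.range (q + 1), Δ (k + n) ω with hS
    have hSint : ∀ q, Integrable (S q) μ := fun q =>
      integrable_finset_sum _ (fun n _ => hΔint (k + n))
    have hSnn : ∀ᵐ ω ∂μ, ∀ q, 0 ≤ S q ω := by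
      filter_upwards [hΔnn] with ω h q
      exact Finset.sum_nonneg fun n _ => h (k + n)
    have hSmono : ∀ᵐ ω ∂μ, Monotone fun q => S q ω := by
      filter_upwards [hΔnn] with ω h
      apply monotone_nat_of_le_succ
      intro q
      simp only [hS]
      rw [Finset.sum_range_succ (fun n => Δ (k + n) ω) (q + 1)]
      have := h (k + (q + 1))
      linarith
    have hSmean : ∀ q, ∫ ω, S q ω ∂μ = ∫ ω, Y (k + q + 1) ω ∂μ - ∫ ω, Y k ω ∂μ := by
      intro q
      rw [hS]
      rw [integral_finset_sum _ (fun n _ => hΔint (k + n))]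
      have : ∀ n ∈ Finset.range (q + 1),
          ∫ ω, Δ (k + n) ω ∂μ = (fun m => ∫ ω, Y (k + m) ω ∂μ) (n + 1)
            - (fun m => ∫ ω, Y (k + m) ω ∂μ) n := by
        intro n _
        simp only
        rw [hΔmean (k + n)]
        ring_nf
      rw [Finset.sum_congr rfl this, Finset.sum_range_sub (fun m => ∫ ω, Y (k + m) ω ∂μ)]
      simp only [Nat.add_zero]
      ring_nf
    -- ENNReal side
    set g : ℕ → Ω → ENNReal := fun q ω => ENNReal.ofReal (S q ω) with hg
    set W : Ω → ENNReal := fun ω => ⨆ q, g q ω with hW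
    have hgmeas : ∀ q, Measurable (g q) := fun q =>
      ENNReal.measurable_ofReal.comp
        (Finset.stronglyMeasurable_fun_sum _ (fun n _ => hΔsm (k + n))).measurable
    have hWmeas : Measurable W := Measurable.iSup hgmeas
    have hglint : ∀ q, ∫⁻ ω, g q ω ∂μ = ENNReal.ofReal (∫ ω, S q ω ∂μ) := by
      intro q
      rw [← ofReal_integral_eq_lintegral_ofReal (hSint q)
        (hSnn.mono fun ω h => h q)]
    have haq_tend : Tendsto (fun q : ℕ => ∫ ω, Y (k + q + 1) ω ∂μ) atTop (nhds l) := by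
      have h1 : Tendsto (fun q : ℕ => q + (k + 1)) atTop atTop :=
        tendsto_add_atTop_nat (k + 1)
      have := hl.comp h1
      convert this using 2 with q
      simp only [Function.comp]
      ring_nf
    have hWlint : ∫⁻ ω, W ω ∂μ = ENNReal.ofReal (l - ∫ ω, Y k ω ∂μ) := by
      rw [hW]
      rw [lintegral_iSup' (fun q => (hgmeas q).aemeasurable)
        (hSmono.mono fun ω h q q' hqq' => ENNReal.ofReal_le_ofReal (h hqq'))]
      simp_rw [hglint, hSmean]
      -- ⨆ q, ofReal (aq) = ofReal L
      have haqmono : Monotone fun q : ℕ =>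
          ENNReal.ofReal (∫ ω, Y (k + q + 1) ω ∂μ - ∫ ω, Y k ω ∂μ) := by
        intro q q' h
        exact ENNReal.ofReal_le_ofReal (by
          have := hmono (show k + q + 1 ≤ k + q' + 1 by omega)
          linarith)
      have htend : Tendsto (fun q : ℕ =>
          ENNReal.ofReal (∫ ω, Y (k + q + 1) ω ∂μ - ∫ ω, Y k ω ∂μ)) atTop
          (nhds (ENNReal.ofReal (l - ∫ ω, Y k ω ∂μ))) :=
        (ENNReal.continuous_ofReal.tendsto _).comp (haq_tend.sub tendsto_const_nhds)
      exact tendsto_nhds_unique (tendsto_atTop_iSup haqmono) htend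
    have hWfin : ∀ᵐ ω ∂μ, W ω < ⊤ :=
      ae_lt_top hWmeas (by rw [hWlint]; exact ENNReal.ofReal_ne_top)
    -- V k = toReal ∘ W a.e.
    have hVW : ∀ᵐ ω ∂μ, V k ω = (W ω).toReal := by
      filter_upwards [hΔnn, hWfin, hSnn, hSmono] with ω hnn hfin hnn' hmon
      have hle : ∀ q, S q ω ≤ (W ω).toReal := by
        intro q
        have h1 : ENNReal.ofReal (S q ω) ≤ W ω := le_iSup (fun q => g q ω) q
        have := ENNReal.toReal_mono hfin.ne h1
        rwa [ENNReal.toReal_ofReal (hnn' q)] at this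
      have hbdd' : BddAbove (Set.range fun q => S q ω) := ⟨_, Set.forall_mem_range.2 hle⟩
      have hVdef : V k ω = ⨆ q, S q ω := hV k ω
      have hofReal : ENNReal.ofReal (⨆ q, S q ω) = W ω := by
        have h1 : Tendsto (fun q => S q ω) atTop (nhds (⨆ q, S q ω)) :=
          tendsto_atTop_ciSup hmon hbdd'
        have h2 : Tendsto (fun q => g q ω) atTop (nhds (ENNReal.ofReal (⨆ q, S q ω))) :=
          (ENNReal.continuous_ofReal.tendsto _).comp h1
        have h3 : Monotone fun q => g q ω := fun q q' h =>
          ENNReal.ofReal_le_ofReal (hmon h)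
        exact tendsto_nhds_unique h2 (tendsto_atTop_iSup h3)
      have hVnn : 0 ≤ V k ω := by
        rw [hVdef]
        exact le_trans (hnn' 0) (le_ciSup hbdd' 0)
      rw [hVdef, ← hofReal, ENNReal.toReal_ofReal (hVdef ▸ hVnn)]
    have hint : Integrable (fun ω => (W ω).toReal) μ :=
      integrable_toReal_of_lintegral_ne_top hWmeas.aemeasurable
        (by rw [hWlint]; exact ENNReal.ofReal_ne_top)
    refine ⟨hint.congr (Filter.EventuallyEq.symm hVW), ?_⟩
    rw [integral_congr_ae hVW, integral_toReal hWmeas.aemeasurable hWfin, hWlint,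
      ENNReal.toReal_ofReal (by linarith [hYle k])]
  refine ⟨key, ?_⟩
  have : Tendsto (fun k : ℕ => l - ∫ ω, Y k ω ∂μ) atTop (nhds (l - l)) :=
    tendsto_const_nhds.sub hl
  rw [sub_self] at this
  exact this.congr (fun k => ((key k).2).symm)
end

section
/- Let (Y_k)_{k∈ℤ₋} be a bounded nonnegative reversed supermartingale with respect to (F_k)_{k∈ℤ₋}. With Δ_k := Y_{-k-1} − E[Y_{-k} | F_{-k-1}] and V_k := Σ_{n≥0} Δ_{k+n} (which converges a.s. and in L¹), the process (Y_k + V_{-k})_{k∈ℤ₋} is a martingale with respect to (F_k)_{k∈ℤ₋}. -/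
open MeasureTheory Filter Topology

theorem measurable_tsum_aux {Ω : Type*} [m : MeasurableSpace Ω] (g : ℕ → Ω → ℝ)
    (hg : ∀ n, Measurable (g n)) : Measurable fun ω => ∑' n, g n ω := by
  classical
  have hS : MeasurableSet {ω | Summable fun n => g n ω} := by
    have h : {ω | Summable fun n => g n ω} =
        {ω | ∃ c, Tendsto (fun s : Finset ℕ => ∑ n ∈ s, g n ω) atTop (𝓝 c)} := rfl
    rw [h]
    exact measurableSet_exists_tendsto fun s => Finset.measurable_sum _ fun n _ => hg n
  refine measurable_of_tendsto_metrizable' (atTop : Filter (Finset ℕ))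
    (f := fun s ω => if Summable (fun n => g n ω) then ∑ n ∈ s, g n ω else 0) ?_ ?_
  · exact fun s => Measurable.ite hS (Finset.measurable_sum _ fun n _ => hg n) measurable_const
  · rw [tendsto_pi_nhds]
    intro ω
    by_cases h : Summable fun n => g n ω
    · simp only [if_pos h]; exact h.hasSum
    · simpa only [if_neg h, tsum_eq_zero_of_not_summable h] using
        (tendsto_const_nhds : Tendsto (fun _ : Finset ℕ => (0 : ℝ)) atTop (𝓝 0))

/-- For a bounded nonnegative reversed supermartingale (Y k = Y₋ₖ), with
Δ_k = Y₋ₖ₋₁ − E[Y₋ₖ | F₋ₖ₋₁] and V_k = Σ_{n≥0} Δ_{k+n}, the process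
Y₋ₖ + V_k is a (reversed) martingale: E[Y₋ₖ + V_k | F₋ₖ₋₁] = Y₋ₖ₋₁ + V_{k+1}. -/
theorem reversed_supermartingale_plus_compensator_martingale
    {Ω : Type*} {m0 : MeasurableSpace Ω} {μ : Measure Ω} [IsProbabilityMeasure μ]
    (G : ℕ → MeasurableSpace Ω) (hG_anti : ∀ k, G (k + 1) ≤ G k)
    (hG_le : ∀ k, G k ≤ m0)
    (Y : ℕ → Ω → ℝ) (hadp : ∀ k, StronglyMeasurable[G k] (Y k))
    (c : ℝ) (hbdd : ∀ k, ∀ᵐ ω ∂μ, 0 ≤ Y k ω ∧ Y k ω ≤ c)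
    (hsuper : ∀ k, μ[Y k | G (k + 1)] ≤ᵐ[μ] Y (k + 1))
    (Δ : ℕ → Ω → ℝ) (hΔ : ∀ k ω, Δ k ω = Y (k + 1) ω - (μ[Y k | G (k + 1)]) ω)
    (V : ℕ → Ω → ℝ) (hV : ∀ k ω, V k ω = ∑' n : ℕ, Δ (k + n) ω)
    (hVsum : ∀ k, ∀ᵐ ω ∂μ, Summable fun n : ℕ => Δ (k + n) ω)
    (hVint : ∀ k, Integrable (V k) μ) :
    ∀ k : ℕ, μ[(fun ω => Y k ω + V k ω) | G (k + 1)]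
      =ᵐ[μ] fun ω => Y (k + 1) ω + V (k + 1) ω := by
  intro k
  have hGanti : Antitone G := antitone_nat_of_succ_le hG_anti
  -- integrability of Y
  have hYint : ∀ j, Integrable (Y j) μ := by
    intro j
    refine Integrable.mono' (integrable_const c) ((hadp j).mono (hG_le j)).aestronglyMeasurable ?_
    filter_upwards [hbdd j] with ω hω
    rw [Real.norm_eq_abs, abs_of_nonneg hω.1]
    exact hω.2
  have hΔeq : ∀ j, Δ j = fun ω => Y (j + 1) ω - (μ[Y j | G (j + 1)]) ω :=
    fun j => funext (hΔ j)
  have hΔint : ∀ j, Integrable (Δ j) μ := by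
    intro j
    rw [hΔeq j]
    exact (hYint (j + 1)).sub integrable_condExp
  have hΔmeas : ∀ j, StronglyMeasurable[G (j + 1)] (Δ j) := by
    intro j
    rw [hΔeq j]
    exact (hadp (j + 1)).sub stronglyMeasurable_condExp
  -- measurability of V (k+1) w.r.t. G (k+1)
  have hVmeas : StronglyMeasurable[G (k + 1)] (V (k + 1)) := by
    have hVe : V (k + 1) = fun ω => ∑' n : ℕ, Δ (k + 1 + n) ω := funext (hV (k + 1))
    rw [hVe]
    have : Measurable[G (k + 1)] fun ω => ∑' n : ℕ, Δ (k + 1 + n) ω := by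
      refine measurable_tsum_aux (m := G (k + 1)) _ fun n => ?_
      exact ((hΔmeas (k + 1 + n)).mono
        (hGanti (by omega : k + 1 ≤ k + 1 + n + 1))).measurable
    exact this.stronglyMeasurable
  -- decomposition: V k = Δ k + V (k+1) a.e.
  have hdecomp : (fun ω => Y k ω + V k ω)
      =ᵐ[μ] fun ω => Y k ω + (Δ k ω + V (k + 1) ω) := by
    filter_upwards [hVsum k] with ω hsum
    have h1 : V k ω = Δ k ω + V (k + 1) ω := by
      rw [hV k, hV (k + 1), Summable.tsum_eq_zero_add hsum]
      congr 1
      exact tsum_congr fun n => by rw [show k + (n + 1) = k + 1 + n by omega]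
    rw [h1]
  -- conditional expectation computation
  calc μ[(fun ω => Y k ω + V k ω) | G (k + 1)]
      =ᵐ[μ] μ[(fun ω => Y k ω + (Δ k ω + V (k + 1) ω)) | G (k + 1)] :=
        condExp_congr_ae hdecomp
    _ =ᵐ[μ] μ[Y k | G (k + 1)] + μ[(fun ω => Δ k ω + V (k + 1) ω) | G (k + 1)] :=
        condExp_add (hYint k) ((hΔint k).add (hVint (k + 1))) (G (k + 1))
    _ =ᵐ[μ] μ[Y k | G (k + 1)] + fun ω => Δ k ω + V (k + 1) ω := by
        refine EventuallyEq.add EventuallyEq.rfl ?_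
        rw [condExp_of_stronglyMeasurable (hG_le (k + 1))
          (f := fun ω => Δ k ω + V (k + 1) ω)
          ((hΔmeas k).add hVmeas) ((hΔint k).add (hVint (k + 1)))]
    _ =ᵐ[μ] fun ω => Y (k + 1) ω + V (k + 1) ω := by
        refine Eventually.of_forall fun ω => ?_
        simp only [Pi.add_apply, hΔ k ω]
        ring
end

section
/- Let (Y_k)_{k∈ℤ₋} be a supermartingale indexed by nonpositive integers such that Y_k − Y' ≥ 0 is a reversed supermartingale, where Y' is the a.s. and L¹ limit of Y_{-k}. Then for every δ > 0 and n ∈ ℕ, P( sup_{k∈ℕ} |Y_{-k-n} − Y'| > δ ) ≤ (2/δ) E[|Y_{-n} − Y'|]. -/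
open MeasureTheory Filter

lemma submartingale_abs_maximal {Ω : Type*} {m0 : MeasurableSpace Ω} {μ : Measure Ω}
    [IsFiniteMeasure μ] {F : Filtration ℕ m0} {W : ℕ → Ω → ℝ} (hW : Submartingale W F μ)
    (m : ℕ) {δ : ℝ} (hδ : 0 < δ) :
    δ * (μ {ω | ∃ j ≤ m, δ < |W j ω|}).toReal
      ≤ 2 * (∫ ω, |W m ω| ∂μ) - ∫ ω, W 0 ω ∂μ := by
  have hWm_int : Integrable (W m) μ := hW.integrable m
  have habs_int : Integrable (fun ω => |W m ω|) μ := hWm_int.abs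
  have hmeasW : ∀ j, Measurable (W j) :=
    fun j => ((hW.stronglyAdapted j).mono (F.le j)).measurable
  set A : Set Ω := {ω | ∃ j ≤ m, W j ω < -δ} with hA
  set B : Set Ω := {ω | ∃ j ≤ m, δ < W j ω} with hB
  have hA_meas : MeasurableSet A := by
    have : A = ⋃ j ∈ Set.Iic m, {ω | W j ω < -δ} := by
      ext ω; simp [hA]
    rw [this]
    exact MeasurableSet.biUnion (Set.to_countable _)
      (fun j _ => measurableSet_lt (hmeasW j) measurable_const)
  have hB_meas : MeasurableSet B := by
    have : B = ⋃ j ∈ Set.Iic m, {ω | δ < W j ω} := by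
      ext ω; simp [hB]
    rw [this]
    exact MeasurableSet.biUnion (Set.to_countable _)
      (fun j _ => measurableSet_lt measurable_const (hmeasW j))
  -- the union bound
  have hsub : {ω | ∃ j ≤ m, δ < |W j ω|} ⊆ A ∪ B := by
    rintro ω ⟨j, hj, hjδ⟩
    rcases lt_abs.mp hjδ with h | h
    · exact Or.inr ⟨j, hj, h⟩
    · exact Or.inl ⟨j, hj, by linarith⟩
  have hμ_le : (μ {ω | ∃ j ≤ m, δ < |W j ω|}).toReal ≤ (μ A).toReal + (μ B).toReal := by
    rw [← ENNReal.toReal_add (measure_ne_top μ A) (measure_ne_top μ B)]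
    exact ENNReal.toReal_mono (by finiteness)
      ((measure_mono hsub).trans (measure_union_le A B))
  -- part A
  have hpartA : δ * (μ A).toReal ≤ (∫ ω, |W m ω| ∂μ) - ∫ ω, W 0 ω ∂μ := by
    set σ : Ω → ℕ∞ := fun ω => (hittingBtwn W (Set.Iio (-δ)) 0 m ω : ℕ) with hσ
    have hσ_stop : IsStoppingTime F σ := hW.stronglyAdapted.adapted.isStoppingTime_hittingBtwn measurableSet_Iio
    have hσ_le : ∀ ω, σ ω ≤ m := fun ω => by simp only [hσ]; exact_mod_cast hittingBtwn_le (u := W) (s := Set.Iio (-δ)) (n := 0) ω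
    have hsv_int : Integrable (stoppedValue W σ) μ := hW.integrable_stoppedValue hσ_stop hσ_le
    have hmono := hW.expected_stoppedValue_mono (isStoppingTime_const F 0) hσ_stop
      (fun ω => by simp only [hσ]; exact WithTop.coe_le_coe.mpr (Nat.zero_le _)) hσ_le
    rw [stoppedValue_const] at hmono
    have hsplit : (∫ ω, stoppedValue W σ ω ∂μ)
        = (∫ ω in A, stoppedValue W σ ω ∂μ) + ∫ ω in Aᶜ, stoppedValue W σ ω ∂μ :=
      (integral_add_compl hA_meas hsv_int).symm
    have hexA : ∀ ω ∈ A, ∃ j ∈ Set.Icc 0 m, W j ω ∈ Set.Iio (-δ) := by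
      rintro ω ⟨j, hj, hjδ⟩
      exact ⟨j, ⟨Nat.zero_le _, hj⟩, hjδ⟩
    have hintA : (∫ ω in A, stoppedValue W σ ω ∂μ) ≤ (μ A).toReal * (-δ) := by
      have := setIntegral_mono_on hsv_int.integrableOn
        integrableOn_const hA_meas
        (fun ω hω => le_of_lt (stoppedValue_hittingBtwn_mem (u := W) (s := Set.Iio (-δ)) (n := 0) (m := m) (hexA ω hω)))
      simpa [setIntegral_const, Measure.real] using this
    have hintAc : (∫ ω in Aᶜ, stoppedValue W σ ω ∂μ) ≤ ∫ ω, |W m ω| ∂μ := by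
      have heq : ∀ ω ∈ Aᶜ, stoppedValue W σ ω = W m ω := by
        intro ω hω
        have hne : ¬∃ j ∈ Set.Icc 0 m, W j ω ∈ Set.Iio (-δ) := by
          rintro ⟨j, hj, hjδ⟩
          exact hω ⟨j, hj.2, hjδ⟩
        simp only [stoppedValue, hσ, hittingBtwn_def]
        rw [if_neg hne]
        simp
      calc (∫ ω in Aᶜ, stoppedValue W σ ω ∂μ) = ∫ ω in Aᶜ, W m ω ∂μ :=
            setIntegral_congr_fun hA_meas.compl heq
        _ ≤ ∫ ω in Aᶜ, |W m ω| ∂μ :=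
            setIntegral_mono_on hWm_int.integrableOn habs_int.integrableOn hA_meas.compl
              (fun ω _ => le_abs_self _)
        _ ≤ ∫ ω, |W m ω| ∂μ :=
            setIntegral_le_integral habs_int (Eventually.of_forall fun ω => abs_nonneg _)
    nlinarith [hmono, hsplit, hintA, hintAc]
  -- part B
  have hpartB : δ * (μ B).toReal ≤ ∫ ω, |W m ω| ∂μ := by
    set τ : Ω → ℕ∞ := fun ω => (hittingBtwn W (Set.Ioi δ) 0 m ω : ℕ) with hτ
    have hτ_stop : IsStoppingTime F τ := hW.stronglyAdapted.adapted.isStoppingTime_hittingBtwn measurableSet_Ioi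
    have hτ_le : ∀ ω, τ ω ≤ m := fun ω => by simp only [hτ]; exact_mod_cast hittingBtwn_le (u := W) (s := Set.Ioi δ) (n := 0) ω
    have hsv_int : Integrable (stoppedValue W τ) μ := hW.integrable_stoppedValue hτ_stop hτ_le
    have hmono := hW.expected_stoppedValue_mono hτ_stop (isStoppingTime_const F m)
      hτ_le (fun ω => le_refl _)
    rw [stoppedValue_const] at hmono
    have hsplit : (∫ ω, stoppedValue W τ ω ∂μ)
        = (∫ ω in B, stoppedValue W τ ω ∂μ) + ∫ ω in Bᶜ, stoppedValue W τ ω ∂μ :=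
      (integral_add_compl hB_meas hsv_int).symm
    have hsplit2 : (∫ ω, W m ω ∂μ)
        = (∫ ω in B, W m ω ∂μ) + ∫ ω in Bᶜ, W m ω ∂μ :=
      (integral_add_compl hB_meas hWm_int).symm
    have hexB : ∀ ω ∈ B, ∃ j ∈ Set.Icc 0 m, W j ω ∈ Set.Ioi δ := by
      rintro ω ⟨j, hj, hjδ⟩
      exact ⟨j, ⟨Nat.zero_le _, hj⟩, hjδ⟩
    have hintB : (μ B).toReal * δ ≤ ∫ ω in B, stoppedValue W τ ω ∂μ := by
      have := setIntegral_mono_on integrableOn_const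
        hsv_int.integrableOn hB_meas
        (fun ω hω => le_of_lt (stoppedValue_hittingBtwn_mem (u := W) (s := Set.Ioi δ) (n := 0) (m := m) (hexB ω hω)))
      simpa [setIntegral_const, Measure.real] using this
    have hintBc : (∫ ω in Bᶜ, stoppedValue W τ ω ∂μ) = ∫ ω in Bᶜ, W m ω ∂μ := by
      refine setIntegral_congr_fun hB_meas.compl (fun ω hω => ?_)
      have hne : ¬∃ j ∈ Set.Icc 0 m, W j ω ∈ Set.Ioi δ := by
        rintro ⟨j, hj, hjδ⟩
        exact hω ⟨j, hj.2, hjδ⟩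
      simp only [stoppedValue, hτ, hittingBtwn_def]
      rw [if_neg hne]
      simp
    have hintBm : (∫ ω in B, W m ω ∂μ) ≤ ∫ ω, |W m ω| ∂μ :=
      le_trans (setIntegral_mono_on hWm_int.integrableOn habs_int.integrableOn hB_meas
        (fun ω _ => le_abs_self _))
        (setIntegral_le_integral habs_int (Eventually.of_forall fun ω => abs_nonneg _))
    nlinarith [hmono, hsplit, hsplit2, hintB, hintBc, hintBm]
  have h1 : δ * (μ {ω | ∃ j ≤ m, δ < |W j ω|}).toReal
      ≤ δ * ((μ A).toReal + (μ B).toReal) := by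
    exact mul_le_mul_of_nonneg_left hμ_le hδ.le
  nlinarith [hpartA, hpartB, h1]

/-- Maximal inequality for a reversed supermartingale (Y k = Y₋ₖ) converging in L¹
to Y': for δ > 0 and n ∈ ℕ,
P(sup_k |Y₋ₖ₋ₙ − Y'| > δ) ≤ (2/δ) E|Y₋ₙ − Y'|. -/
theorem reversed_supermartingale_maximal_inequality
    {Ω : Type*} {m0 : MeasurableSpace Ω} {μ : Measure Ω} [IsProbabilityMeasure μ]
    (G : ℕ → MeasurableSpace Ω) (hG_anti : ∀ k, G (k + 1) ≤ G k)
    (hG_le : ∀ k, G k ≤ m0)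
    (Y : ℕ → Ω → ℝ) (hadp : ∀ k, StronglyMeasurable[G k] (Y k))
    (hint : ∀ k, Integrable (Y k) μ)
    (Y' : Ω → ℝ) (hY'meas : StronglyMeasurable[⨅ k, G k] Y')
    (hY'int : Integrable Y' μ)
    (hL1 : Tendsto (fun k : ℕ => ∫ ω, |Y k ω - Y' ω| ∂μ) atTop (nhds 0))
    (hsuper : ∀ k, μ[(fun ω => Y k ω - Y' ω) | G (k + 1)]
      ≤ᵐ[μ] fun ω => Y (k + 1) ω - Y' ω) :
    ∀ δ : ℝ, 0 < δ → ∀ n : ℕ,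
      μ {ω | ∃ k : ℕ, δ < |Y (k + n) ω - Y' ω|}
        ≤ ENNReal.ofReal ((2 / δ) * ∫ ω, |Y n ω - Y' ω| ∂μ) := by
  intro δ hδ n
  have hGanti : Antitone G := antitone_nat_of_succ_le hG_anti
  set Z : ℕ → Ω → ℝ := fun k ω => Y k ω - Y' ω with hZ
  have hZmeas : ∀ k, StronglyMeasurable[G k] (Z k) :=
    fun k => (hadp k).sub (hY'meas.mono (iInf_le G k))
  have hZint : ∀ k, Integrable (Z k) μ := fun k => (hint k).sub hY'int
  set a : ℕ → ℝ := fun k => ∫ ω, |Z k ω| ∂μ with ha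
  have ha_nonneg : ∀ k, 0 ≤ a k := fun k => integral_nonneg fun ω => abs_nonneg _
  set c : ℝ := a n with hc
  set E : ℕ → Set Ω := fun m => {ω | ∃ k ≤ m, δ < |Z (k + n) ω|} with hE
  -- key inequality for each horizon m
  have key : ∀ m : ℕ, δ * (μ (E m)).toReal ≤ 2 * c + a (m + n) := by
    intro m
    -- the reversed filtration and process
    set F : Filtration ℕ m0 :=
      { seq := fun j => G (n + m - min j m)
        mono' := fun j j' hjj' => hGanti (by omega)
        le' := fun j => hG_le _ } with hF
    set X : ℕ → Ω → ℝ := fun j ω => Z (n + m - min j m) ω with hX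
    have hX_adp : StronglyAdapted F X := fun j => hZmeas _
    have hX_int : ∀ j, Integrable (X j) μ := fun j => hZint _
    have hX_super : Supermartingale X F μ := by
      refine supermartingale_nat hX_adp hX_int fun j => ?_
      by_cases hjm : j < m
      · have e1 : n + m - min (j + 1) m = n + m - (j + 1) := by omega
        have e2 : n + m - min j m = (n + m - (j + 1)) + 1 := by omega
        have : μ[Z (n + m - (j + 1)) | G ((n + m - (j + 1)) + 1)]
            ≤ᵐ[μ] Z ((n + m - (j + 1)) + 1) := hsuper (n + m - (j + 1))
        simp only [hX, hF]
        rw [e1, e2]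
        exact this
      · have e1 : n + m - min (j + 1) m = n := by omega
        have e2 : n + m - min j m = n := by omega
        simp only [hX, hF]
        rw [e1, e2]
        rw [condExp_of_stronglyMeasurable (hG_le n) (hZmeas n) (hZint n)]
      -- done
    have hW := hX_super.neg
    have haux := submartingale_abs_maximal hW m hδ
    -- identify the event
    have hevent : {ω | ∃ j ≤ m, δ < |(-X) j ω|} = E m := by
      ext ω
      simp only [hE, Set.mem_setOf_eq, Pi.neg_apply, abs_neg, hX]
      constructor
      · rintro ⟨j, hj, hjδ⟩
        refine ⟨m - j, by omega, ?_⟩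
        have : m - j + n = n + m - min j m := by omega
        rwa [this]
      · rintro ⟨k, hk, hkδ⟩
        refine ⟨m - k, by omega, ?_⟩
        have : n + m - min (m - k) m = k + n := by omega
        rwa [this]
    rw [hevent] at haux
    -- identify the integrals
    have hXm : ∀ ω, (-X) m ω = -(Z n ω) := by
      intro ω; simp only [Pi.neg_apply, hX]
      congr 2; omega
    have hX0 : ∀ ω, (-X) 0 ω = -(Z (n + m) ω) := by
      intro ω; simp only [Pi.neg_apply, hX]
      congr 2
    have hIm : (∫ ω, |(-X) m ω| ∂μ) = c := by
      simp only [hc, ha]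
      refine integral_congr_ae (Eventually.of_forall fun ω => ?_)
      show |(-X) m ω| = |Z n ω|
      rw [hXm ω, abs_neg]
    have hI0 : (∫ ω, (-X) 0 ω ∂μ) = -∫ ω, Z (n + m) ω ∂μ := by
      rw [← integral_neg]
      exact integral_congr_ae (Eventually.of_forall fun ω => hX0 ω)
    rw [hIm, hI0] at haux
    have hZa : (∫ ω, Z (n + m) ω ∂μ) ≤ a (m + n) := by
      have : a (m + n) = ∫ ω, |Z (n + m) ω| ∂μ := by rw [ha]; congr 1; omega
      rw [this]
      exact integral_mono (hZint _) (hZint _).abs fun ω => le_abs_self _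
    linarith
  -- convert to ENNReal bound
  have key2 : ∀ m : ℕ, μ (E m) ≤ ENNReal.ofReal ((2 * c + a (m + n)) / δ) := by
    intro m
    rw [← ENNReal.ofReal_toReal (measure_ne_top μ (E m))]
    exact ENNReal.ofReal_le_ofReal ((le_div_iff₀ hδ).mpr (by linarith [key m]))
  -- monotone union
  have hmono : Monotone E := by
    intro m m' hmm' ω ⟨k, hk, hkδ⟩
    exact ⟨k, hk.trans hmm', hkδ⟩
  have hU : {ω | ∃ k : ℕ, δ < |Y (k + n) ω - Y' ω|} = ⋃ m, E m := by
    ext ω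
    simp only [Set.mem_iUnion, hE, Set.mem_setOf_eq, hZ]
    constructor
    · rintro ⟨k, hkδ⟩; exact ⟨k, k, le_rfl, hkδ⟩
    · rintro ⟨m, k, _, hkδ⟩; exact ⟨k, hkδ⟩
  have htendL : Tendsto (fun m => μ (E m)) atTop (nhds (μ (⋃ m, E m))) :=
    tendsto_measure_iUnion_atTop hmono
  have htendR : Tendsto (fun m => ENNReal.ofReal ((2 * c + a (m + n)) / δ)) atTop
      (nhds (ENNReal.ofReal ((2 * c + 0) / δ))) := by
    refine (ENNReal.continuous_ofReal.tendsto _).comp ?_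
    exact (tendsto_const_nhds.add (hL1.comp (tendsto_add_atTop_nat n))).div_const δ
  have hfinal : μ (⋃ m, E m) ≤ ENNReal.ofReal ((2 * c + 0) / δ) :=
    le_of_tendsto_of_tendsto' htendL htendR key2
  rw [hU]
  refine hfinal.trans (le_of_eq ?_)
  congr 1
  simp only [hc, ha, hZ]
  ring
end
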